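/- arXiv:1603.04592 — 3 statements merged into one kernel-verified Lean document; each statement's English description precedes it below -/
import Mathlib

section
/- Let n ≥ 2 be an integer and let g(t) = (∑_{k=1}^{n} a_k t^k) − 1 be a polynomial where each a_k is a nonnegative integer, a_n ≥ 1, and the greatest common divisor of the set {k ∈ ℕ : a_k ≠ 0} is 1. Then there exists a real number r0 with 0 < r0 < 1 such that g(r0) = 0 and every complex root z of g with z ≠ r0 satisfies |z| > r0; in particular, r0 is the unique root of g having the smallest absolute value among all complex roots of g. -/
/-! Since the coefficients are nonnegative, `t ↦ ∑ aₖ tᵏ` increases from `0` to `∑ aₖ ≥ 2` on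
`[0, 1]`, which gives the root `r₀ ∈ (0, 1)`. If `g z = 0` with `‖z‖ ≤ r₀`, then
`1 = Re ∑ aₖ zᵏ ≤ ∑ aₖ ‖z‖ᵏ ≤ ∑ aₖ r₀ᵏ = 1`, so all these are equalities and `zᵏ = r₀ᵏ` whenever
`aₖ ≠ 0`. As these exponents are coprime, the order of `z / r₀` is `1`. -/

open Polynomial Finset

lemma Complex.eq_ofReal_of_norm_le_of_le_re {w : ℂ} {x : ℝ} (hnorm : ‖w‖ ≤ x) (hre : x ≤ w.re) :
    w = x := by
  have hw : w.re = ‖w‖ := le_antisymm w.re_le_norm (hnorm.trans hre)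
  obtain ⟨-, him⟩ := Complex.nonneg_iff.mp (Complex.re_eq_norm.mp hw)
  exact Complex.ext (by simp; linarith) (by simp [him])

lemma eq_of_forall_pow_eq_of_gcd_eq_one {G₀ : Type*} [CommGroupWithZero G₀] {t : Finset ℕ}
    (ht : t.gcd id = 1) {x y : G₀} (hy : y ≠ 0) (h : ∀ k ∈ t, x ^ k = y ^ k) : x = y := by
  have hdvd : orderOf (x / y) ∣ t.gcd id :=
    Finset.dvd_gcd fun k hk ↦ orderOf_dvd_of_pow_eq_one <| by
      rw [id, div_pow, h k hk, div_self (pow_ne_zero _ hy)]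
  rw [ht, Nat.dvd_one, orderOf_eq_one_iff, div_eq_one_iff_eq hy] at hdvd
  exact hdvd

section NonnegCoeffs

variable {s : Finset ℕ} {a : ℕ → ℝ}

/-- Equality case of the triangle inequality `‖∑ aₖ zᵏ‖ ≤ ∑ aₖ ‖z‖ᵏ`. -/
lemma pow_eq_of_sum_mul_pow_eq (ha : ∀ k ∈ s, 0 ≤ a k) {z : ℂ} {r : ℝ} (hz : ‖z‖ ≤ r)
    (h : ∑ k ∈ s, (a k : ℂ) * z ^ k = ((∑ k ∈ s, a k * r ^ k : ℝ) : ℂ))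
    {k : ℕ} (hk : k ∈ s) (hak : a k ≠ 0) : z ^ k = (r : ℂ) ^ k := by
  have hnorm : ∀ j, ‖z ^ j‖ ≤ r ^ j := fun j ↦
    (norm_pow z j).trans_le (pow_le_pow_left₀ (norm_nonneg z) hz j)
  have hterm : ∀ j ∈ s, a j * (z ^ j).re ≤ a j * r ^ j := fun j hj ↦
    mul_le_mul_of_nonneg_left ((z ^ j).re_le_norm.trans (hnorm j)) (ha j hj)
  have hsum : ∑ j ∈ s, a j * (z ^ j).re = ∑ j ∈ s, a j * r ^ j := by
    simpa [Complex.re_sum, ← Complex.ofReal_pow] using congrArg Complex.re h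
  have hre : r ^ k ≤ (z ^ k).re :=
    (mul_right_inj' hak).mp ((sum_eq_sum_iff_of_le hterm).mp hsum k hk) |>.ge
  rw [Complex.eq_ofReal_of_norm_le_of_le_re (hnorm k) hre, Complex.ofReal_pow]

lemma eq_of_norm_le_of_sum_mul_pow_eq (ha : ∀ k ∈ s, 0 ≤ a k)
    (hgcd : (s.filter (a · ≠ 0)).gcd id = 1) {z : ℂ} {r : ℝ} (hr : 0 < r) (hz : ‖z‖ ≤ r)
    (h : ∑ k ∈ s, (a k : ℂ) * z ^ k = ((∑ k ∈ s, a k * r ^ k : ℝ) : ℂ)) : z = r :=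
  eq_of_forall_pow_eq_of_gcd_eq_one hgcd (by exact_mod_cast hr.ne') fun k hk ↦
    let ⟨hks, hak⟩ := mem_filter.mp hk
    pow_eq_of_sum_mul_pow_eq ha hz h hks hak

end NonnegCoeffs

lemma two_le_sum_of_gcd_filter_ne_zero_eq_one {s : Finset ℕ} {a : ℕ → ℕ} {n : ℕ} (hn : n ∈ s)
    (hn1 : n ≠ 1) (han : a n ≠ 0) (hgcd : (s.filter (a · ≠ 0)).gcd id = 1) :
    2 ≤ ∑ k ∈ s, a k := by
  by_contra! hlt
  have hcard : #(s.filter (a · ≠ 0)) ≤ 1 :=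
    calc #(s.filter (a · ≠ 0)) ≤ ∑ k ∈ s.filter (a · ≠ 0), a k :=
          by simpa using card_nsmul_le_sum _ _ 1 fun k hk ↦
            Nat.one_le_iff_ne_zero.mpr (mem_filter.mp hk).2
      _ ≤ ∑ k ∈ s, a k := sum_le_sum_of_subset (filter_subset _ _)
      _ ≤ 1 := by omega
  have hnf : n ∈ s.filter (a · ≠ 0) := mem_filter.mpr ⟨hn, han⟩
  have hsingle : s.filter (a · ≠ 0) = {n} :=
    eq_singleton_iff_unique_mem.mpr ⟨hnf, fun m hm ↦ card_le_one.mp hcard m hm n hnf⟩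
  rw [hsingle, gcd_singleton, id, normalize_eq] at hgcd
  exact hn1 hgcd

/-- Let `n ≥ 2` and `g(t) = (∑_{k=1}^n a_k t^k) - 1` with nonnegative integer
coefficients `a_k`, `a_n ≥ 1`, and `gcd {k : a_k ≠ 0} = 1`. Then there is a real `r0`,
`0 < r0 < 1`, which is a root of `g`, and every other complex root of `g` has absolute
value strictly greater than `r0`. -/
theorem growth_denominator_has_unique_smallest_root
    (n : ℕ) (hn : 2 ≤ n) (a : ℕ → ℕ) (g : Polynomial ℤ)
    (hg : g = (∑ k ∈ Finset.Icc 1 n, C (a k : ℤ) * X ^ k) - 1)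
    (han : 1 ≤ a n)
    (hgcd : ((Finset.Icc 1 n).filter fun k => a k ≠ 0).gcd id = 1) :
    ∃ r0 : ℝ, 0 < r0 ∧ r0 < 1 ∧ aeval r0 g = 0 ∧
      ∀ z : ℂ, aeval z g = 0 → z ≠ (r0 : ℂ) → (r0 : ℝ) < ‖z‖ := by
  set F : ℝ → ℝ := fun t ↦ ∑ k ∈ Icc 1 n, (a k : ℝ) * t ^ k with hF
  have hF0 : F 0 = 0 :=
    sum_eq_zero fun k hk ↦ by simp [Nat.one_le_iff_ne_zero.mp (mem_Icc.mp hk).1]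
  have hF1 : 1 < F 1 := by
    have h2 := two_le_sum_of_gcd_filter_ne_zero_eq_one (right_mem_Icc.mpr (by omega))
      (by omega) (by omega) hgcd
    simp only [hF, one_pow, mul_one]
    exact_mod_cast h2
  obtain ⟨r0, ⟨hr0, hr1⟩, hFr0⟩ := intermediate_value_Ioo zero_le_one
    (by fun_prop : Continuous F).continuousOn ⟨hF0.trans_lt zero_lt_one, hF1⟩
  refine ⟨r0, hr0, hr1, by simpa [hg, sub_eq_zero] using hFr0, fun z hz hzr ↦ ?_⟩
  by_contra! hle
  refine hzr (eq_of_norm_le_of_sum_mul_pow_eq (a := fun k ↦ (a k : ℝ))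
    (fun k _ ↦ Nat.cast_nonneg _) (by simpa using hgcd) hr0 hle ?_)
  change _ = ((F r0 : ℝ) : ℂ)
  rw [hFr0, Complex.ofReal_one]
  simpa [hg, sub_eq_zero] using hz
end

section
/- Let n ≥ 2 be an integer and let g(t) = (∑_{k=1}^{n} a_k t^k) − 1 be a polynomial where each a_k is a nonnegative integer, a_n ≥ 1, and the greatest common divisor of the set {k ∈ ℕ : a_k ≠ 0} is 1. Let r0 be the unique root of g of smallest absolute value (which is real with 0 < r0 < 1). Then 1/r0 is a Perron number. -/
open Polynomial

/-- A *Perron number* is a real algebraic integer `τ > 1` such that every complex root of the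
minimal polynomial of `τ` over `ℚ` other than `τ` itself has absolute value strictly less
than `τ`. -/
def IsPerronNumber (τ : ℝ) : Prop :=
  1 < τ ∧ IsIntegral ℤ τ ∧
    ∀ z : ℂ, aeval z (minpoly ℚ τ) = 0 → z ≠ (τ : ℂ) → ‖z‖ < τ

/-!
The conjugates of `1/r0` are the inverses of roots of `g`: every root of the minimal polynomial
of `1/r0` is a root of the reversed polynomial of `g`, since `1/r0` is. As `r0` is the root of `g`
of smallest modulus, `1/r0` is the conjugate of largest modulus. Integrality holds because the
constant coefficient `-1` of `g` becomes the leading coefficient of its reversal.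
-/

namespace Polynomial

theorem aeval_inv_reverse_eq_zero_iff {R K : Type*} [CommSemiring R] [Field K] [Algebra R K]
    {x : K} (hx : x ≠ 0) (p : R[X]) : aeval x⁻¹ p.reverse = 0 ↔ aeval x p = 0 := by
  let := invertibleOfNonzero hx
  simpa only [aeval_def, invOf_eq_inv] using eval₂_reverse_eq_zero_iff (algebraMap R K) x p

theorem isIntegral_inv_of_aeval_eq_zero {R K : Type*} [CommRing R] [Field K] [Algebra R K]
    {p : R[X]} (hp : IsUnit (p.coeff 0)) {x : K} (hx : x ≠ 0) (hpx : aeval x p = 0) :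
    IsIntegral R x⁻¹ := by
  have := (algebraMap R K).domain_nontrivial
  obtain ⟨u, hu⟩ := hp
  have hmonic : (C (↑u⁻¹ : R) * p.reverse).Monic := by
    refine monic_C_mul_of_mul_leadingCoeff_eq_one ?_
    rw [reverse_leadingCoeff, trailingCoeff_eq_coeff_zero (hu ▸ u.ne_zero), ← hu, u.inv_mul]
  refine ⟨_, hmonic, ?_⟩
  rw [← aeval_def, map_mul, (aeval_inv_reverse_eq_zero_iff hx p).2 hpx, mul_zero]

theorem aeval_eq_zero_of_aeval_minpoly_eq_zero {R F A B : Type*} [CommRing R] [Field F] [Ring A]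
    [Semiring B] [Algebra R F] [Algebra F A] [Algebra R A] [IsScalarTower R F A] [Algebra F B]
    [Algebra R B] [IsScalarTower R F B] {x : A} {p : R[X]} (hp : aeval x p = 0) {z : B}
    (hz : aeval z (minpoly F x) = 0) : aeval z p = 0 := by
  obtain ⟨q, hq⟩ :=
    minpoly.dvd F x (p := p.map (algebraMap R F)) (by rwa [aeval_map_algebraMap])
  rw [← aeval_map_algebraMap F, hq, map_mul, hz, zero_mul]

theorem ne_zero_of_aeval_minpoly_eq_zero {F A B : Type*} [Field F] [Ring A] [IsDomain A]
    [Algebra F A] [Semiring B] [Nontrivial B] [Algebra F B] {x : A} (hx : IsIntegral F x)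
    (hx0 : x ≠ 0) {z : B} (hz : aeval z (minpoly F x) = 0) : z ≠ 0 := by
  rintro rfl
  refine minpoly.coeff_zero_ne_zero hx hx0 ((map_eq_zero_iff _ (algebraMap F B).injective).1 ?_)
  rwa [coeff_zero_eq_aeval_zero']

end Polynomial

theorem one_div_smallest_root_isPerronNumber_general
    (n : ℕ) (a : ℕ → ℕ) (g : Polynomial ℤ)
    (hg : g = (∑ k ∈ Finset.Icc 1 n, C (a k : ℤ) * X ^ k) - 1)
    (r0 : ℝ) (hr0_pos : 0 < r0) (hr0_lt_one : r0 < 1)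
    (hr0_root : aeval r0 g = 0)
    (hr0_min : ∀ z : ℂ, aeval z g = 0 → z ≠ (r0 : ℂ) → (r0 : ℝ) < ‖z‖) :
    IsPerronNumber (1 / r0) := by
  rw [one_div]
  have hg0 : g.coeff 0 = -1 := by
    subst hg
    simp [coeff_X_pow]
  have hr0 : r0 ≠ 0 := hr0_pos.ne'
  have hint : IsIntegral ℤ r0⁻¹ :=
    isIntegral_inv_of_aeval_eq_zero (hg0 ▸ isUnit_one.neg) hr0 hr0_root
  refine ⟨one_lt_inv₀ hr0_pos |>.2 hr0_lt_one, hint, fun z hz hzτ => ?_⟩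
  have hz0 : z ≠ 0 :=
    ne_zero_of_aeval_minpoly_eq_zero (hint.tower_top (A := ℚ)) (inv_ne_zero hr0) hz
  have hgz : aeval z⁻¹ g = 0 := by
    rw [← aeval_inv_reverse_eq_zero_iff (inv_ne_zero hz0), inv_inv]
    exact aeval_eq_zero_of_aeval_minpoly_eq_zero
      ((aeval_inv_reverse_eq_zero_iff hr0 g).2 hr0_root) hz
  have hzr : z⁻¹ ≠ (r0 : ℂ) := fun h => hzτ (by rw [← inv_inv z, h, Complex.ofReal_inv])
  have := hr0_min z⁻¹ hgz hzr
  rwa [norm_inv, lt_inv_comm₀ hr0_pos (norm_pos_iff.2 hz0)] at this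

/-- With `g(t) = (∑_{k=1}^n a_k t^k) - 1` as before (`n ≥ 2`, `a_k ≥ 0`,
`a_n ≥ 1`, `gcd {k : a_k ≠ 0} = 1`), if `r0` is the unique root of `g` of smallest absolute
value (real with `0 < r0 < 1`), then `1/r0` is a Perron number. -/
theorem one_div_smallest_root_isPerronNumber
    (n : ℕ) (hn : 2 ≤ n) (a : ℕ → ℕ) (g : Polynomial ℤ)
    (hg : g = (∑ k ∈ Finset.Icc 1 n, C (a k : ℤ) * X ^ k) - 1)
    (han : 1 ≤ a n)
    (hgcd : ((Finset.Icc 1 n).filter fun k => a k ≠ 0).gcd id = 1)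
    (r0 : ℝ) (hr0_pos : 0 < r0) (hr0_lt_one : r0 < 1)
    (hr0_root : aeval r0 g = 0)
    (hr0_min : ∀ z : ℂ, aeval z g = 0 → z ≠ (r0 : ℂ) → (r0 : ℝ) < ‖z‖) :
    IsPerronNumber (1 / r0) :=
  one_div_smallest_root_isPerronNumber_general n a g hg r0 hr0_pos hr0_lt_one hr0_root hr0_min
end

section
/- Let f and v2222 be nonnegative integers with f ≥ 5, v2222 ≥ 1, and (v2222, f) ≠ (1, 5). Define the polynomial H₂(t) = (v2222 − 1)·t² + (f − 4)·t − 1 with integer coefficients. Then all coefficients of H₂ in positive degrees are nonnegative, and there exists a real number r0 with 0 < r0 < 1 such that H₂(r0) = 0, every complex root z of H₂ with z ≠ r0 satisfies |z| > r0, and 1/r0 is a Perron number. -/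
open Polynomial

/-!
With `a = v2222 - 1` and `b = f - 4`, substituting `t = 1/w` gives
`H₂(t) = -t² (w² - b w - a)`. So `r0 = 1/τ`, where `τ = (b + √(b² + 4a))/2` is the larger root of
the monic integer polynomial `w² - b w - a`; `τ > 1` because `a + b > 1`. The other root `b - τ`
lies in `(-τ, 0]`, which gives both the separation of the roots of `H₂` and the Perron property,
as the minimal polynomial of `τ` divides `w² - b w - a`.
-/
theorem isPerronNumber_of_aeval_eq_zero {P : ℤ[X]} (hP : P.Monic) {τ : ℝ}
    (hτP : aeval τ P = 0) (hτ : 1 < τ)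
    (hroots : ∀ z : ℂ, aeval z P = 0 → z ≠ (τ : ℂ) → ‖z‖ < τ) : IsPerronNumber τ := by
  have hdvd : minpoly ℚ τ ∣ P.map (algebraMap ℤ ℚ) :=
    minpoly.dvd ℚ τ (by rw [aeval_map_algebraMap, hτP])
  refine ⟨hτ, ⟨P, hP, hτP⟩, fun z hz hne => hroots z ?_ hne⟩
  obtain ⟨q, hq⟩ := hdvd
  rw [← aeval_map_algebraMap ℚ, hq, map_mul, hz, zero_mul]

theorem eq_or_eq_sub_of_sq_sub_mul_sub_eq_zero {K : Type*} [CommRing K] [IsDomain K]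
    {a b τ w : K} (hτ : τ ^ 2 - b * τ - a = 0) (hw : w ^ 2 - b * w - a = 0) :
    w = τ ∨ w = b - τ := by
  have : (w - τ) * (w - (b - τ)) = 0 := by linear_combination hw - hτ
  simpa only [mul_eq_zero, sub_eq_zero] using this

theorem exists_root_sq_sub_mul_sub {a b : ℝ} (ha : 0 ≤ a) (hb : 0 < b) (hab : 1 < a + b) :
    ∃ τ : ℝ, τ ^ 2 - b * τ - a = 0 ∧ b ≤ τ ∧ 1 < τ := by
  set s := √(b ^ 2 + 4 * a)
  have hs : s ^ 2 = b ^ 2 + 4 * a := Real.sq_sqrt (by positivity)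
  have hbs : b ≤ s := Real.le_sqrt_of_sq_le (by linarith)
  refine ⟨(b + s) / 2, by linear_combination hs / 4, by linarith, ?_⟩
  nlinarith

theorem norm_lt_of_sq_sub_mul_sub_eq_zero {a b τ : ℝ} (hb : 0 < b) (hbτ : b ≤ τ)
    (hτ : τ ^ 2 - b * τ - a = 0) {z : ℂ} (hz : z ^ 2 - b * z - a = 0) (hne : z ≠ τ) :
    ‖z‖ < τ := by
  have hτC : (τ : ℂ) ^ 2 - b * τ - a = 0 := by exact_mod_cast congrArg Complex.ofReal hτ
  obtain rfl | rfl := eq_or_eq_sub_of_sq_sub_mul_sub_eq_zero hτC hz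
  · exact absurd rfl hne
  · rw [← Complex.ofReal_sub, Complex.norm_real, Real.norm_of_nonpos (by linarith)]
    linarith

theorem coeff_C_mul_X_sq_add_C_mul_X_sub_one_nonneg {a b : ℤ} (ha : 0 ≤ a) (hb : 0 ≤ b)
    {k : ℕ} (hk : 1 ≤ k) : 0 ≤ (C a * X ^ 2 + C b * X - 1 : ℤ[X]).coeff k := by
  simp only [coeff_sub, coeff_add, coeff_C_mul_X_pow, coeff_C_mul_X, coeff_one]
  rcases k with _ | _ | _ | k <;> simp <;> omega

theorem aeval_C_mul_X_sq_add_C_mul_X_sub_one {K : Type*} [Field K] (a b : ℤ) {z : K}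
    (hz : z ≠ 0) :
    aeval z (C a * X ^ 2 + C b * X - 1 : ℤ[X]) = -z ^ 2 * (z⁻¹ ^ 2 - b * z⁻¹ - a) := by
  simp only [eq_intCast, aeval_sub, map_add, map_mul, map_intCast, map_pow, aeval_X, map_one]
  field_simp
  ring

/-- For `f ≥ 5`, `v2222 ≥ 1` with `(v2222, f) ≠ (1, 5)`, the polynomial
`H₂(t) = (v2222 - 1)t² + (f - 4)t - 1` has nonnegative coefficients in all positive degrees,
and it has a root `r0 ∈ (0,1)` such that every other complex root has absolute value
strictly greater than `r0`, and `1/r0` is a Perron number. -/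
theorem right_angled_growth_rate_isPerronNumber
    (f v2222 : ℕ) (hf : 5 ≤ f) (hv : 1 ≤ v2222) (hne : ¬(v2222 = 1 ∧ f = 5))
    (H : Polynomial ℤ)
    (hH : H = C ((v2222 : ℤ) - 1) * X ^ 2 + C ((f : ℤ) - 4) * X - 1) :
    (∀ k : ℕ, 1 ≤ k → 0 ≤ H.coeff k) ∧
    ∃ r0 : ℝ, 0 < r0 ∧ r0 < 1 ∧ aeval r0 H = 0 ∧
      (∀ z : ℂ, aeval z H = 0 → z ≠ (r0 : ℂ) → (r0 : ℝ) < ‖z‖) ∧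
      IsPerronNumber (1 / r0) := by
  have ha : (0 : ℤ) ≤ v2222 - 1 := by omega
  have hb : (0 : ℤ) < f - 4 := by omega
  have hab : (1 : ℤ) < (v2222 - 1) + (f - 4) := by omega
  generalize (v2222 : ℤ) - 1 = a at ha hab hH
  generalize (f : ℤ) - 4 = b at hb hab hH
  subst hH
  refine ⟨fun k => coeff_C_mul_X_sq_add_C_mul_X_sub_one_nonneg ha hb.le, ?_⟩
  obtain ⟨τ, hτ, hbτ, hτ1⟩ :=
    exists_root_sq_sub_mul_sub (a := a) (b := b) (by exact_mod_cast ha) (by exact_mod_cast hb)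
      (by exact_mod_cast hab)
  have hτ0 : 0 < τ := by linarith
  refine ⟨τ⁻¹, inv_pos.2 hτ0, inv_lt_one_of_one_lt₀ hτ1, ?_, ?_, ?_⟩
  · rw [aeval_C_mul_X_sq_add_C_mul_X_sub_one a b (inv_ne_zero hτ0.ne'), inv_inv, hτ, mul_zero]
  · intro z hz hzτ
    have hz0 : z ≠ 0 := by rintro rfl; simp at hz
    rw [aeval_C_mul_X_sq_add_C_mul_X_sub_one a b hz0] at hz
    have hroot : z⁻¹ ^ 2 - (b : ℝ) * z⁻¹ - (a : ℝ) = 0 := by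
      simpa [hz0] using hz
    have hnorm := norm_lt_of_sq_sub_mul_sub_eq_zero (by exact_mod_cast hb) hbτ hτ hroot
      (by rintro h; exact hzτ (by rw [← inv_inv z, h, Complex.ofReal_inv]))
    rw [norm_inv] at hnorm
    exact (inv_lt_comm₀ (norm_pos_iff.2 hz0) hτ0).1 hnorm
  · rw [one_div, inv_inv]
    refine isPerronNumber_of_aeval_eq_zero (P := X ^ 2 - C b * X - C a) (by monicity!)
      (by simp [hτ]) hτ1 fun z hz hzτ => norm_lt_of_sq_sub_mul_sub_eq_zero
        (by exact_mod_cast hb) hbτ hτ (by simpa using hz) hzτ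
end
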